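/- Stability of viscosity subsolutions under monotone decreasing limits: assume (H1). Let (f^p)_{p∈ℕ} and f̃ be continuous generators [0,T]×ℝⁿ×ℝ×ℝ^d×A×B → ℝ with f^{p+1} ≤ f^p pointwise and f^p → f̃ uniformly on compact subsets. Let ℓ, ℓ' : [0,T]×ℝⁿ → ℝ be continuous bounded obstacles with ℓ < ℓ' and G : ℝⁿ → ℝ continuous bounded with ℓ(T,·) ≤ G ≤ ℓ'(T,·). For each p, let w^p be a continuous viscosity solution of the obstacle Isaacs equation E(f^p, ℓ, ℓ', G) satisfying ℓ ≤ w^p ≤ ℓ', and assume w^{p+1} ≤ w^p pointwise. Define w⁰(t,x) := lim_{p→∞} w^p(t,x). Then w⁰ is a viscosity subsolution of E(f̃, ℓ, ℓ', G). -/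

import Mathlib

open Set Filter Topology

noncomputable section

/-- Euclidean space `ℝⁿ`. -/
abbrev En (n : ℕ) : Type := EuclideanSpace ℝ (Fin n)

/-- Frobenius norm of a matrix. -/
noncomputable def frobNorm {n d : ℕ} (M : Matrix (Fin n) (Fin d) ℝ) : ℝ :=
  Real.sqrt (∑ i, ∑ j, (M i j) ^ 2)

/-- Row vector `q` multiplied by the matrix `M`. -/
def rowMul {n d : ℕ} (q : En n) (M : Matrix (Fin n) (Fin d) ℝ) : En d :=
  WithLp.toLp 2 (fun j => ∑ i, q i * M i j)

/-- The lower Hamiltonian `H⁻ = sup_α inf_β [½Tr(σσᵀX) + ⟨b,q⟩ + f(t,x,r,qσ,α,β)]`,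
for a generic generator `f`. -/
noncomputable def Hinf {n d : ℕ} (A B : Type)
    (b : ℝ → En n → A → B → En n)
    (σm : ℝ → En n → A → B → Matrix (Fin n) (Fin d) ℝ)
    (f : ℝ → En n → ℝ → En d → A → B → ℝ)
    (t : ℝ) (x : En n) (r : ℝ) (q : En n) (X : Matrix (Fin n) (Fin n) ℝ) : ℝ :=
  ⨆ α : A, ⨅ β : B,
    (1 / 2) * Matrix.trace (σm t x α β * (σm t x α β).transpose * X)
      + (inner ℝ (b t x α β) q : ℝ)
      + f t x r (rowMul q (σm t x α β)) α β

/-- The upper Hamiltonian `H⁺ = inf_β sup_α [...]`. -/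
noncomputable def Hsup {n d : ℕ} (A B : Type)
    (b : ℝ → En n → A → B → En n)
    (σm : ℝ → En n → A → B → Matrix (Fin n) (Fin d) ℝ)
    (f : ℝ → En n → ℝ → En d → A → B → ℝ)
    (t : ℝ) (x : En n) (r : ℝ) (q : En n) (X : Matrix (Fin n) (Fin n) ℝ) : ℝ :=
  ⨅ β : B, ⨆ α : A,
    (1 / 2) * Matrix.trace (σm t x α β * (σm t x α β).transpose * X)
      + (inner ℝ (b t x α β) q : ℝ)
      + f t x r (rowMul q (σm t x α β)) α β

/-- `φ` is of class `C^{1,2}` on `[0,T)×ℝⁿ`, with time derivative `φt`,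
spatial gradient `Dφ` and spatial Hessian `D2φ`, all continuous on `[0,T)×ℝⁿ`. -/
structure IsC12 (T : ℝ) {n : ℕ} (φ φt : ℝ → En n → ℝ) (Dφ : ℝ → En n → En n)
    (D2φ : ℝ → En n → Matrix (Fin n) (Fin n) ℝ) : Prop where
  cont : ContinuousOn (fun p : ℝ × En n => φ p.1 p.2) (Ico 0 T ×ˢ univ)
  cont_t : ContinuousOn (fun p : ℝ × En n => φt p.1 p.2) (Ico 0 T ×ˢ univ)
  cont_D : ContinuousOn (fun p : ℝ × En n => Dφ p.1 p.2) (Ico 0 T ×ˢ univ)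
  cont_D2 : ContinuousOn (fun p : ℝ × En n => D2φ p.1 p.2) (Ico 0 T ×ˢ univ)
  deriv_t : ∀ t ∈ Ico (0 : ℝ) T, ∀ x : En n,
    HasDerivWithinAt (fun s => φ s x) (φt t x) (Ico 0 T) t
  grad_x : ∀ t ∈ Ico (0 : ℝ) T, ∀ x : En n, HasGradientAt (fun y => φ t y) (Dφ t x) x
  hess_x : ∀ t ∈ Ico (0 : ℝ) T, ∀ x : En n,
    HasFDerivAt (fun y => Dφ t y)
      (LinearMap.toContinuousLinearMap (Matrix.toEuclideanLin (D2φ t x))) x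

/-- `u` is a viscosity subsolution of the obstacle equation
`min{u-ℓ, max{-∂u/∂t - H(t,x,u,Du,D²u), u-ℓ'}} = 0` on `[0,T)×ℝⁿ`, `u(T,·) = G`. -/
def IsSubsolution (T : ℝ) {n : ℕ}
    (H : ℝ → En n → ℝ → En n → Matrix (Fin n) (Fin n) ℝ → ℝ)
    (ℓ ℓ' : ℝ → En n → ℝ) (G : En n → ℝ) (u : ℝ → En n → ℝ) : Prop :=
  UpperSemicontinuousOn (fun p : ℝ × En n => u p.1 p.2) (Icc 0 T ×ˢ univ)
  ∧ (∀ x : En n, u T x ≤ G x)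
  ∧ ∀ (φ φt : ℝ → En n → ℝ) (Dφ : ℝ → En n → En n)
      (D2φ : ℝ → En n → Matrix (Fin n) (Fin n) ℝ),
      IsC12 T φ φt Dφ D2φ →
      ∀ t ∈ Ico (0 : ℝ) T, ∀ x : En n,
        (∀ s ∈ Ico (0 : ℝ) T, ∀ y : En n, u s y - φ s y ≤ u t x - φ t x) →
        min (u t x - ℓ t x)
          (max (-(φt t x) - H t x (u t x) (Dφ t x) (D2φ t x)) (u t x - ℓ' t x)) ≤ 0

/-- `u` is a viscosity supersolution of the obstacle equation. -/
def IsSupersolution (T : ℝ) {n : ℕ}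
    (H : ℝ → En n → ℝ → En n → Matrix (Fin n) (Fin n) ℝ → ℝ)
    (ℓ ℓ' : ℝ → En n → ℝ) (G : En n → ℝ) (u : ℝ → En n → ℝ) : Prop :=
  LowerSemicontinuousOn (fun p : ℝ × En n => u p.1 p.2) (Icc 0 T ×ˢ univ)
  ∧ (∀ x : En n, G x ≤ u T x)
  ∧ ∀ (φ φt : ℝ → En n → ℝ) (Dφ : ℝ → En n → En n)
      (D2φ : ℝ → En n → Matrix (Fin n) (Fin n) ℝ),
      IsC12 T φ φt Dφ D2φ →
      ∀ t ∈ Ico (0 : ℝ) T, ∀ x : En n,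
        (∀ s ∈ Ico (0 : ℝ) T, ∀ y : En n, u t x - φ t x ≤ u s y - φ s y) →
        0 ≤ min (u t x - ℓ t x)
          (max (-(φt t x) - H t x (u t x) (Dφ t x) (D2φ t x)) (u t x - ℓ' t x))

/-- Hypothesis (H1): continuity of `b`, `σ` on `[0,T]×ℝⁿ×A×B` and uniform
Lipschitz continuity in `x`. -/
def HypH1 {n d : ℕ} (T : ℝ) (A B : Type) [TopologicalSpace A] [TopologicalSpace B]
    (b : ℝ → En n → A → B → En n)
    (σm : ℝ → En n → A → B → Matrix (Fin n) (Fin d) ℝ) : Prop :=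
  ContinuousOn (fun p : ℝ × En n × A × B => b p.1 p.2.1 p.2.2.1 p.2.2.2)
      (Icc 0 T ×ˢ (univ : Set (En n × A × B)))
  ∧ ContinuousOn (fun p : ℝ × En n × A × B => σm p.1 p.2.1 p.2.2.1 p.2.2.2)
      (Icc 0 T ×ˢ (univ : Set (En n × A × B)))
  ∧ ∃ CL > (0 : ℝ), ∀ t ∈ Icc (0 : ℝ) T, ∀ (x x' : En n) (α : A) (β : B),
      ‖b t x α β - b t x' α β‖ + frobNorm (σm t x α β - σm t x' α β) ≤ CL * ‖x - x'‖

/-- Hypothesis (H2): `g`, `h`, `h'` continuous and bounded, `h < h'`,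
`h(T,·) ≤ g ≤ h'(T,·)`; `F` continuous with quadratic growth in `z`
with constant `C`. -/
def HypH2 {n d : ℕ} (T C : ℝ) (A B : Type) [TopologicalSpace A] [TopologicalSpace B]
    (g : En n → ℝ) (h h' : ℝ → En n → ℝ)
    (F : ℝ → En n → ℝ → En d → A → B → ℝ) : Prop :=
  Continuous g ∧ (∃ M, ∀ x : En n, |g x| ≤ M)
  ∧ ContinuousOn (fun p : ℝ × En n => h p.1 p.2) (Icc 0 T ×ˢ univ)
  ∧ ContinuousOn (fun p : ℝ × En n => h' p.1 p.2) (Icc 0 T ×ˢ univ)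
  ∧ (∃ M, ∀ t ∈ Icc (0 : ℝ) T, ∀ x : En n, |h t x| ≤ M ∧ |h' t x| ≤ M)
  ∧ (∀ t ∈ Icc (0 : ℝ) T, ∀ x : En n, h t x < h' t x)
  ∧ (∀ x : En n, h T x ≤ g x ∧ g x ≤ h' T x)
  ∧ ContinuousOn
      (fun p : ℝ × En n × ℝ × En d × A × B =>
        F p.1 p.2.1 p.2.2.1 p.2.2.2.1 p.2.2.2.2.1 p.2.2.2.2.2)
      (Icc 0 T ×ˢ (univ : Set (En n × ℝ × En d × A × B)))
  ∧ 0 < C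
  ∧ ∀ t ∈ Icc (0 : ℝ) T, ∀ (x : En n) (y : ℝ) (z : En d) (α : A) (β : B),
      |F t x y z α β| ≤ C * (1 + ‖z‖ ^ 2)

/-- Hypothesis (H3): `F` is differentiable in `(x,y,z)`, with
`|∂F/∂x|, |∂F/∂z| ≤ C(1+|z|²)` and `∂F/∂y ≤ C_ε + ε|z|²` for every `ε > 0`. -/
def HypH3 {n d : ℕ} (T C : ℝ) (A B : Type)
    (F : ℝ → En n → ℝ → En d → A → B → ℝ) : Prop :=
  ∃ (Fx : ℝ → En n → ℝ → En d → A → B → En n)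
    (Fy : ℝ → En n → ℝ → En d → A → B → ℝ)
    (Fz : ℝ → En n → ℝ → En d → A → B → En d),
    (∀ t ∈ Icc (0 : ℝ) T, ∀ (x : En n) (y : ℝ) (z : En d) (α : A) (β : B),
      HasGradientAt (fun x' => F t x' y z α β) (Fx t x y z α β) x
      ∧ HasDerivAt (fun y' => F t x y' z α β) (Fy t x y z α β) y
      ∧ HasGradientAt (fun z' => F t x y z' α β) (Fz t x y z α β) z
      ∧ ‖Fx t x y z α β‖ ≤ C * (1 + ‖z‖ ^ 2)
      ∧ ‖Fz t x y z α β‖ ≤ C * (1 + ‖z‖ ^ 2))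
    ∧ ∀ ε > (0 : ℝ), ∃ Cε > (0 : ℝ), ∀ t ∈ Icc (0 : ℝ) T,
        ∀ (x : En n) (y : ℝ) (z : En d) (α : A) (β : B),
          Fy t x y z α β ≤ Cε + ε * ‖z‖ ^ 2

/-- The function `ρ(x) = (1/λ) ln((e^{λγx}+1)/γ)`. -/
noncomputable def rho (γ lam : ℝ) (x : ℝ) : ℝ :=
  (1 / lam) * Real.log ((Real.exp (lam * γ * x) + 1) / γ)

/-- `ρ'`. -/
noncomputable def rho' (γ lam : ℝ) : ℝ → ℝ := deriv (rho γ lam)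

/-- `ρ''`. -/
noncomputable def rho'' (γ lam : ℝ) : ℝ → ℝ := deriv (rho' γ lam)

/-- The transformed generator
`F̄(t,x,ū,z̄) = (ρ''(ū)/ρ'(ū))|z̄|² − Kρ(ū)/ρ'(ū) + (e^{Kt}/ρ'(ū)) F(t,x,e^{−Kt}ρ(ū)+C̃,e^{−Kt}ρ'(ū)z̄)`. -/
noncomputable def Fbar {n d : ℕ} {A B : Type} (γ lam K Ct : ℝ)
    (F : ℝ → En n → ℝ → En d → A → B → ℝ)
    (t : ℝ) (x : En n) (ub : ℝ) (zb : En d) (α : A) (β : B) : ℝ :=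
  (rho'' γ lam ub / rho' γ lam ub) * ‖zb‖ ^ 2
    - K * rho γ lam ub / rho' γ lam ub
    + (Real.exp (K * t) / rho' γ lam ub)
      * F t x (Real.exp (-(K * t)) * rho γ lam ub + Ct)
          ((Real.exp (-(K * t)) * rho' γ lam ub) • zb) α β

/-- The change of variable `ū(t,x) = ρ⁻¹(e^{Kt}(u(t,x) − C̃))`. -/
noncomputable def transf {n : ℕ} (γ lam K Ct : ℝ) (u : ℝ → En n → ℝ) : ℝ → En n → ℝ :=
  fun t x => Function.invFun (rho γ lam) (Real.exp (K * t) * (u t x - Ct))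

/-- `(p,q,X)` belongs to the second-order parabolic superjet `𝒫^{2,+}u(t₀,x₀)`. -/
def ParabSuperjet (T : ℝ) {n : ℕ} (u : ℝ → En n → ℝ) (t0 : ℝ) (x0 : En n)
    (p : ℝ) (q : En n) (X : Matrix (Fin n) (Fin n) ℝ) : Prop :=
  X.IsSymm ∧
  ∀ ε > (0 : ℝ), ∃ δ > (0 : ℝ), ∀ t ∈ Ico (0 : ℝ) T, ∀ x : En n,
    |t - t0| < δ → ‖x - x0‖ < δ →
    u t x ≤ u t0 x0 + p * (t - t0) + (inner ℝ q (x - x0) : ℝ)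
      + (1 / 2) * (inner ℝ (Matrix.toEuclideanLin X (x - x0)) (x - x0) : ℝ)
      + ε * (|t - t0| + ‖x - x0‖ ^ 2)

/-- The parabolic subjet `𝒫^{2,−}u = −𝒫^{2,+}(−u)`. -/
def ParabSubjet (T : ℝ) {n : ℕ} (u : ℝ → En n → ℝ) (t0 : ℝ) (x0 : En n)
    (p : ℝ) (q : En n) (X : Matrix (Fin n) (Fin n) ℝ) : Prop :=
  ParabSuperjet T (fun t x => -(u t x)) t0 x0 (-p) (-q) (-X)

/-- The closure `𝒫̄^{2,+}u(t₀,x₀)` of the parabolic superjet. -/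
def ClosedParabSuperjet (T : ℝ) {n : ℕ} (u : ℝ → En n → ℝ) (t0 : ℝ) (x0 : En n)
    (p : ℝ) (q : En n) (X : Matrix (Fin n) (Fin n) ℝ) : Prop :=
  ∃ (tk : ℕ → ℝ) (xk : ℕ → En n) (pk : ℕ → ℝ) (qk : ℕ → En n)
    (Xk : ℕ → Matrix (Fin n) (Fin n) ℝ),
    (∀ k, tk k ∈ Ico (0 : ℝ) T ∧ ParabSuperjet T u (tk k) (xk k) (pk k) (qk k) (Xk k))
    ∧ Tendsto tk atTop (nhds t0) ∧ Tendsto xk atTop (nhds x0)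
    ∧ Tendsto (fun k => u (tk k) (xk k)) atTop (nhds (u t0 x0))
    ∧ Tendsto pk atTop (nhds p) ∧ Tendsto qk atTop (nhds q)
    ∧ Tendsto Xk atTop (nhds X)

/-- The doubled and penalized function
`Ψ_{ε,η}(t,x,y) = ū(t,x) − v̄(t,y) − |x−y|²/ε² − η(|x|²+|y|²)`. -/
noncomputable def Psi {n : ℕ} (ub vb : ℝ → En n → ℝ) (ε η : ℝ)
    (t : ℝ) (x y : En n) : ℝ :=
  ub t x - vb t y - ‖x - y‖ ^ 2 / ε ^ 2 - η * (‖x‖ ^ 2 + ‖y‖ ^ 2)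

/-- The exponentially transformed generator
`f(t,x,y,z) = 2Cy[F(t,x,(ln y)/(2C), z/(2Cy)) − |z|²/(4Cy²)]` for `y > 0`, `0` otherwise. -/
noncomputable def expGen {n d : ℕ} {A B : Type} (C : ℝ)
    (F : ℝ → En n → ℝ → En d → A → B → ℝ)
    (t : ℝ) (x : En n) (y : ℝ) (z : En d) (α : A) (β : B) : ℝ :=
  if 0 < y then
    2 * C * y * (F t x (Real.log y / (2 * C)) ((1 / (2 * C * y)) • z) α β
      - ‖z‖ ^ 2 / (4 * C * y ^ 2))
  else 0


/-!
`w⁰` is a decreasing limit of continuous functions, hence upper semicontinuous, and it inherits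
the terminal bound and the obstacle bounds. At a maximum `(t₀, x₀)` of `w⁰ - φ` with `w⁰ > ℓ`,
adding `κ (t - t₀)² + ‖x - x₀‖⁴` to `φ` makes the maximum strict without changing the derivatives
of `φ` at `(t₀, x₀)`, and, the obstacles being bounded, confines the maxima of `wᵖ - φ - penalty`
to a fixed compact set. Since `wᵖ` decreases, `limsup wᵖ(zₚ) ≤ w⁰(z)` along `zₚ → z`, which forces
the maximizers to converge to `(t₀, x₀)` with `wᵖ(zₚ) → w⁰(t₀, x₀)`. There the obstacle is
inactive for `wᵖ`, and the PDE inequality passes to the limit because the Hamiltonians of `fᵖ`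
converge locally uniformly.
-/

section SupInf

variable {A B : Type*}

lemma bddBelow_range_of_abs_le {u : B → ℝ} {C : ℝ} (hu : ∀ β, |u β| ≤ C) :
    BddBelow (range u) :=
  ⟨-C, by rintro _ ⟨β, rfl⟩; exact (abs_le.1 (hu β)).1⟩

lemma bddAbove_range_ciInf_of_abs_le [Nonempty B] {u : A → B → ℝ} {C : ℝ}
    (hu : ∀ α β, |u α β| ≤ C) : BddAbove (range fun α => ⨅ β, u α β) :=
  ⟨C, by
    rintro _ ⟨α, rfl⟩
    exact (ciInf_le (bddBelow_range_of_abs_le (hu α)) (Classical.arbitrary B)).trans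
      (abs_le.1 (hu α _)).2⟩

lemma ciSup_ciInf_le_add [Nonempty A] [Nonempty B] {u v : A → B → ℝ} {C ε : ℝ}
    (hu : ∀ α β, |u α β| ≤ C) (hv : ∀ α β, |v α β| ≤ C) (huv : ∀ α β, u α β ≤ v α β + ε) :
    ⨆ α, ⨅ β, u α β ≤ (⨆ α, ⨅ β, v α β) + ε := by
  refine ciSup_le fun α => ?_
  have h : (⨅ β, u α β) - ε ≤ ⨅ β, v α β := le_ciInf fun β => by
    linarith [ciInf_le (bddBelow_range_of_abs_le (hu α)) β, huv α β]
  linarith [le_ciSup (bddAbove_range_ciInf_of_abs_le hv) α]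

lemma abs_ciSup_ciInf_sub_le [Nonempty A] [Nonempty B] {g h : A → B → ℝ} {C ε : ℝ}
    (hh : ∀ α β, |h α β| ≤ C) (hgh : ∀ α β, |g α β - h α β| ≤ ε) :
    |(⨆ α, ⨅ β, g α β) - ⨆ α, ⨅ β, h α β| ≤ ε := by
  have hg : ∀ α β, |g α β| ≤ C + ε := fun α β => by
    linarith [abs_sub_abs_le_abs_sub (g α β) (h α β), hh α β, hgh α β]
  have hh' : ∀ α β, |h α β| ≤ C + ε := fun α β => by
    linarith [hh α β, (abs_nonneg _).trans (hgh α β)]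
  rw [abs_sub_le_iff]
  constructor
  · linarith [ciSup_ciInf_le_add hg hh' fun α β => by linarith [(abs_le.1 (hgh α β)).2]]
  · linarith [ciSup_ciInf_le_add hh' hg fun α β => by linarith [(abs_le.1 (hgh α β)).1]]

lemma tendsto_ciSup_ciInf_of_tendstoUniformly [Nonempty A] [Nonempty B] {ι : Type*}
    {l : Filter ι} {F : ι → A → B → ℝ} {F₀ : A → B → ℝ} {C : ℝ} (hC : ∀ α β, |F₀ α β| ≤ C)
    (hF : TendstoUniformly (fun k (c : A × B) => F k c.1 c.2) (fun c => F₀ c.1 c.2) l) :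
    Tendsto (fun k => ⨆ α, ⨅ β, F k α β) l (𝓝 (⨆ α, ⨅ β, F₀ α β)) := by
  refine Metric.tendsto_nhds.2 fun ε hε => ?_
  filter_upwards [Metric.tendstoUniformly_iff.1 hF (ε / 2) (half_pos hε)] with k hk
  refine (abs_ciSup_ciInf_sub_le hC fun α β => ?_).trans_lt (half_lt_self hε)
  rw [← Real.dist_eq, dist_comm]
  exact (hk (α, β)).le

end SupInf

lemma ContinuousOn.continuous_comp_projIcc_fst {α X Y : Type*} [LinearOrder α] [TopologicalSpace α]
    [OrderTopology α] [TopologicalSpace X] [TopologicalSpace Y] {a b : α} (h : a ≤ b)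
    {F : α × X → Y} (hF : ContinuousOn F (Icc a b ×ˢ univ)) :
    Continuous fun p : α × X => F (projIcc a b h p.1, p.2) := by
  rw [← continuousOn_univ]
  exact hF.comp (by fun_prop) fun p _ => ⟨(projIcc a b h p.1).2, mem_univ _⟩

lemma Continuous.tendstoUniformly_comp_tendsto {Z C β ι : Type*} [TopologicalSpace Z]
    [TopologicalSpace C] [CompactSpace C] [UniformSpace β] {Φ : Z → C → β}
    (hΦ : Continuous fun p : Z × C => Φ p.1 p.2) {l : Filter ι} {zk : ι → Z} {z : Z}
    (hzk : Tendsto zk l (𝓝 z)) : TendstoUniformly (fun k => Φ (zk k)) (Φ z) l :=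
  ContinuousMap.tendsto_iff_tendstoUniformly.1
    (((ContinuousMap.curry ⟨_, hΦ⟩).continuous.tendsto z).comp hzk)

lemma TendstoUniformlyOn.tendstoUniformly_comp_of_tendsto {Y Z C β : Type*} [TopologicalSpace Y]
    [TopologicalSpace Z] [TopologicalSpace C] [CompactSpace C] [PseudoMetricSpace β]
    {F : ℕ → Y → β} {F₀ : Y → β} (hF : ∀ K, IsCompact K → TendstoUniformlyOn F F₀ atTop K)
    (hF₀ : Continuous F₀) {e : Z → C → Y} (he : Continuous fun p : Z × C => e p.1 p.2)
    {zk : ℕ → Z} {z : Z} (hzk : Tendsto zk atTop (𝓝 z)) {pk : ℕ → ℕ}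
    (hpk : Tendsto pk atTop atTop) :
    TendstoUniformly (fun k c => F (pk k) (e (zk k) c)) (fun c => F₀ (e z c)) atTop := by
  have hK := (hzk.isCompact_insert_range.prod (isCompact_univ (X := C))).image he
  have hF₀e := Metric.tendstoUniformly_iff.1
    ((hF₀.comp he).tendstoUniformly_comp_tendsto (Φ := fun z c => F₀ (e z c)) hzk)
  refine Metric.tendstoUniformly_iff.2 fun ε hε => ?_
  filter_upwards [hF₀e (ε / 2) (half_pos hε),
    hpk.eventually (Metric.tendstoUniformlyOn_iff.1 (hF _ hK) (ε / 2) (half_pos hε))] with k h₁ h₂ c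
  calc dist (F₀ (e z c)) (F (pk k) (e (zk k) c))
      ≤ dist (F₀ (e z c)) (F₀ (e (zk k) c)) + dist (F₀ (e (zk k) c)) (F (pk k) (e (zk k) c)) :=
        dist_triangle _ _ _
    _ < ε / 2 + ε / 2 :=
        add_lt_add (h₁ c) (h₂ _ ⟨(zk k, c), ⟨mem_insert_of_mem _ ⟨k, rfl⟩, mem_univ c⟩, rfl⟩)
    _ = ε := add_halves ε

section Hamiltonian

variable {n d : ℕ} {A B : Type}

@[fun_prop]
lemma Continuous.rowMul {X : Type*} [TopologicalSpace X] {q : X → En n}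
    {M : X → Matrix (Fin n) (Fin d) ℝ} (hq : Continuous q) (hM : Continuous M) :
    Continuous fun p => rowMul (q p) (M p) := by
  unfold _root_.rowMul
  fun_prop

def hamiltonianIntegrand (b : ℝ → En n → A → B → En n)
    (σm : ℝ → En n → A → B → Matrix (Fin n) (Fin d) ℝ)
    (f : ℝ → En n → ℝ → En d → A → B → ℝ) (t : ℝ) (x : En n) (r : ℝ) (q : En n)
    (X : Matrix (Fin n) (Fin n) ℝ) (α : A) (β : B) : ℝ :=
  (1 / 2) * Matrix.trace (σm t x α β * (σm t x α β).transpose * X)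
    + (inner ℝ (b t x α β) q : ℝ) + f t x r (rowMul q (σm t x α β)) α β

lemma hamiltonianIntegrand_eq_add (b : ℝ → En n → A → B → En n)
    (σm : ℝ → En n → A → B → Matrix (Fin n) (Fin d) ℝ) (f : ℝ → En n → ℝ → En d → A → B → ℝ)
    (t : ℝ) (x : En n) (r : ℝ) (q : En n) (X : Matrix (Fin n) (Fin n) ℝ) (α : A) (β : B) :
    hamiltonianIntegrand b σm f t x r q X α β
      = hamiltonianIntegrand b σm 0 t x r q X α β + f t x r (rowMul q (σm t x α β)) α β := by
  simp [hamiltonianIntegrand]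

variable [TopologicalSpace A] [TopologicalSpace B]

lemma Continuous.hamiltonianIntegrand {b : ℝ → En n → A → B → En n}
    {σm : ℝ → En n → A → B → Matrix (Fin n) (Fin d) ℝ} {f : ℝ → En n → ℝ → En d → A → B → ℝ}
    (hb : Continuous fun p : ℝ × En n × A × B => b p.1 p.2.1 p.2.2.1 p.2.2.2)
    (hσ : Continuous fun p : ℝ × En n × A × B => σm p.1 p.2.1 p.2.2.1 p.2.2.2)
    (hf : Continuous fun p : ℝ × En n × ℝ × En d × A × B =>
      f p.1 p.2.1 p.2.2.1 p.2.2.2.1 p.2.2.2.2.1 p.2.2.2.2.2)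
    {Y : Type*} [TopologicalSpace Y] {t : Y → ℝ} {x : Y → En n} {r : Y → ℝ} {q : Y → En n}
    {X : Y → Matrix (Fin n) (Fin n) ℝ} {α : Y → A} {β : Y → B} (ht : Continuous t)
    (hx : Continuous x) (hr : Continuous r) (hq : Continuous q) (hX : Continuous X)
    (hα : Continuous α) (hβ : Continuous β) :
    Continuous fun y => hamiltonianIntegrand b σm f (t y) (x y) (r y) (q y) (X y) (α y) (β y) := by
  have hb' : Continuous fun y => b (t y) (x y) (α y) (β y) :=
    hb.comp (f := fun y => (t y, x y, α y, β y)) (by fun_prop)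
  have hσ' : Continuous fun y => σm (t y) (x y) (α y) (β y) :=
    hσ.comp (f := fun y => (t y, x y, α y, β y)) (by fun_prop)
  have hf' : Continuous fun y =>
      f (t y) (x y) (r y) (_root_.rowMul (q y) (σm (t y) (x y) (α y) (β y))) (α y) (β y) :=
    hf.comp (f := fun y =>
      (t y, x y, r y, _root_.rowMul (q y) (σm (t y) (x y) (α y) (β y)), α y, β y)) (by fun_prop)
  unfold _root_.hamiltonianIntegrand
  fun_prop

lemma tendsto_Hinf [CompactSpace A] [CompactSpace B] [Nonempty A] [Nonempty B]
    {b : ℝ → En n → A → B → En n} {σm : ℝ → En n → A → B → Matrix (Fin n) (Fin d) ℝ}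
    {fs : ℕ → ℝ → En n → ℝ → En d → A → B → ℝ} {f : ℝ → En n → ℝ → En d → A → B → ℝ}
    (hb : Continuous fun p : ℝ × En n × A × B => b p.1 p.2.1 p.2.2.1 p.2.2.2)
    (hσ : Continuous fun p : ℝ × En n × A × B => σm p.1 p.2.1 p.2.2.1 p.2.2.2)
    (hf : Continuous fun p : ℝ × En n × ℝ × En d × A × B =>
      f p.1 p.2.1 p.2.2.1 p.2.2.2.1 p.2.2.2.2.1 p.2.2.2.2.2)
    (hfs : ∀ K : Set (ℝ × En n × ℝ × En d × A × B), IsCompact K →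
      TendstoUniformlyOn (fun p (y : ℝ × En n × ℝ × En d × A × B) =>
          fs p y.1 y.2.1 y.2.2.1 y.2.2.2.1 y.2.2.2.2.1 y.2.2.2.2.2)
        (fun y => f y.1 y.2.1 y.2.2.1 y.2.2.2.1 y.2.2.2.2.1 y.2.2.2.2.2) atTop K)
    {tk : ℕ → ℝ} {xk : ℕ → En n} {rk : ℕ → ℝ} {qk : ℕ → En n}
    {Xk : ℕ → Matrix (Fin n) (Fin n) ℝ} {t : ℝ} {x : En n} {r : ℝ} {q : En n}
    {X : Matrix (Fin n) (Fin n) ℝ} (htk : Tendsto tk atTop (𝓝 t)) (hxk : Tendsto xk atTop (𝓝 x))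
    (hrk : Tendsto rk atTop (𝓝 r)) (hqk : Tendsto qk atTop (𝓝 q)) (hXk : Tendsto Xk atTop (𝓝 X))
    {pk : ℕ → ℕ} (hpk : Tendsto pk atTop atTop) :
    Tendsto (fun k => Hinf A B b σm (fs (pk k)) (tk k) (xk k) (rk k) (qk k) (Xk k)) atTop
      (𝓝 (Hinf A B b σm f t x r q X)) := by
  have hjet := htk.prodMk_nhds (hxk.prodMk_nhds (hrk.prodMk_nhds (hqk.prodMk_nhds hXk)))
  obtain ⟨C, hC⟩ := (isCompact_univ (X := A × B)).exists_bound_of_continuousOn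
    (f := fun c => hamiltonianIntegrand b σm f t x r q X c.1 c.2)
    (hb.hamiltonianIntegrand hσ hf continuous_const continuous_const continuous_const
      continuous_const continuous_const continuous_fst continuous_snd).continuousOn
  refine tendsto_ciSup_ciInf_of_tendstoUniformly
    (F := fun k => hamiltonianIntegrand b σm (fs (pk k)) (tk k) (xk k) (rk k) (qk k) (Xk k))
    (F₀ := hamiltonianIntegrand b σm f t x r q X) (C := C)
    (fun α β => by simpa using hC (α, β) (mem_univ _)) ?_
  have hσσ : Continuous fun p : (ℝ × En n × ℝ × En n × Matrix (Fin n) (Fin n) ℝ) × A × B =>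
      hamiltonianIntegrand b σm 0 p.1.1 p.1.2.1 p.1.2.2.1 p.1.2.2.2.1 p.1.2.2.2.2 p.2.1 p.2.2 :=
    hb.hamiltonianIntegrand hσ continuous_const (by fun_prop) (by fun_prop) (by fun_prop)
      (by fun_prop) (by fun_prop) (by fun_prop) (by fun_prop)
  have hσ' : Continuous fun p : (ℝ × En n × ℝ × En n × Matrix (Fin n) (Fin n) ℝ) × A × B =>
      σm p.1.1 p.1.2.1 p.2.1 p.2.2 :=
    hσ.comp (f := fun p : (ℝ × En n × ℝ × En n × Matrix (Fin n) (Fin n) ℝ) × A × B =>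
      (p.1.1, p.1.2.1, p.2.1, p.2.2)) (by fun_prop)
  have hgen := TendstoUniformlyOn.tendstoUniformly_comp_of_tendsto hfs hf
    (e := fun (z : ℝ × En n × ℝ × En n × Matrix (Fin n) (Fin n) ℝ) (c : A × B) =>
      (z.1, z.2.1, z.2.2.1, rowMul z.2.2.2.1 (σm z.1 z.2.1 c.1 c.2), c.1, c.2))
    (by fun_prop) hjet hpk
  have hsum := (hσσ.tendstoUniformly_comp_tendsto
    (Φ := fun (z : ℝ × En n × ℝ × En n × Matrix (Fin n) (Fin n) ℝ) (c : A × B) =>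
      hamiltonianIntegrand b σm 0 z.1 z.2.1 z.2.2.1 z.2.2.2.1 z.2.2.2.2 c.1 c.2) hjet).add hgen
  convert hsum using 1 <;> ext <;> exact hamiltonianIntegrand_eq_add ..

lemma tendsto_Hinf_of_continuousOn [CompactSpace A] [CompactSpace B] [Nonempty A] [Nonempty B]
    {T : ℝ} (hT : 0 ≤ T)
    {b : ℝ → En n → A → B → En n} {σm : ℝ → En n → A → B → Matrix (Fin n) (Fin d) ℝ}
    {fs : ℕ → ℝ → En n → ℝ → En d → A → B → ℝ} {f : ℝ → En n → ℝ → En d → A → B → ℝ}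
    (hb : ContinuousOn (fun p : ℝ × En n × A × B => b p.1 p.2.1 p.2.2.1 p.2.2.2)
      (Icc 0 T ×ˢ univ))
    (hσ : ContinuousOn (fun p : ℝ × En n × A × B => σm p.1 p.2.1 p.2.2.1 p.2.2.2)
      (Icc 0 T ×ˢ univ))
    (hf : ContinuousOn (fun p : ℝ × En n × ℝ × En d × A × B =>
      f p.1 p.2.1 p.2.2.1 p.2.2.2.1 p.2.2.2.2.1 p.2.2.2.2.2) (Icc 0 T ×ˢ univ))
    (hfs : ∀ K : Set (ℝ × En n × ℝ × En d × A × B), IsCompact K →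
      TendstoUniformlyOn (fun p (y : ℝ × En n × ℝ × En d × A × B) =>
          fs p y.1 y.2.1 y.2.2.1 y.2.2.2.1 y.2.2.2.2.1 y.2.2.2.2.2)
        (fun y => f y.1 y.2.1 y.2.2.1 y.2.2.2.1 y.2.2.2.2.1 y.2.2.2.2.2) atTop K)
    {tk : ℕ → ℝ} {xk : ℕ → En n} {rk : ℕ → ℝ} {qk : ℕ → En n}
    {Xk : ℕ → Matrix (Fin n) (Fin n) ℝ} {t : ℝ} {x : En n} {r : ℝ} {q : En n}
    {X : Matrix (Fin n) (Fin n) ℝ} (htkT : ∀ k, tk k ∈ Icc 0 T) (htT : t ∈ Icc 0 T)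
    (htk : Tendsto tk atTop (𝓝 t)) (hxk : Tendsto xk atTop (𝓝 x))
    (hrk : Tendsto rk atTop (𝓝 r)) (hqk : Tendsto qk atTop (𝓝 q)) (hXk : Tendsto Xk atTop (𝓝 X))
    {pk : ℕ → ℕ} (hpk : Tendsto pk atTop atTop) :
    Tendsto (fun k => Hinf A B b σm (fs (pk k)) (tk k) (xk k) (rk k) (qk k) (Xk k)) atTop
      (𝓝 (Hinf A B b σm f t x r q X)) := by
  -- extend the data to all times by freezing them outside `[0, T]`
  set π : ℝ → ℝ := fun s => projIcc 0 T hT s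
  have hπ : ∀ {s}, s ∈ Icc 0 T → π s = s := fun hs => congrArg Subtype.val (projIcc_of_mem hT hs)
  have hclamp : ∀ (g : ℝ → En n → ℝ → En d → A → B → ℝ) {s}, s ∈ Icc 0 T →
      ∀ x r q X, Hinf A B (fun s => b (π s)) (fun s => σm (π s)) (fun s => g (π s)) s x r q X
        = Hinf A B b σm g s x r q X := by
    intro g s hs x r q X
    change Hinf A B b σm g (π s) x r q X = _
    rw [hπ hs]
  set c : ℝ × En n × ℝ × En d × A × B → ℝ × En n × ℝ × En d × A × B := fun y => (π y.1, y.2)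
  have hc : Continuous c := by fun_prop
  have hfs' : ∀ K : Set (ℝ × En n × ℝ × En d × A × B), IsCompact K →
      TendstoUniformlyOn (fun p (y : ℝ × En n × ℝ × En d × A × B) =>
          fs p (π y.1) y.2.1 y.2.2.1 y.2.2.2.1 y.2.2.2.2.1 y.2.2.2.2.2)
        (fun y => f (π y.1) y.2.1 y.2.2.1 y.2.2.2.1 y.2.2.2.2.1 y.2.2.2.2.2) atTop K :=
    fun K hK => ((hfs _ (hK.image hc)).comp c).mono (subset_preimage_image c K)
  have key := tendsto_Hinf (b := fun s => b (π s)) (σm := fun s => σm (π s))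
    (fs := fun p s => fs p (π s)) (f := fun s => f (π s)) (hb.continuous_comp_projIcc_fst hT)
    (hσ.continuous_comp_projIcc_fst hT) (hf.continuous_comp_projIcc_fst hT) hfs' htk hxk hrk hqk
    hXk hpk
  rw [← hclamp f htT]
  exact key.congr fun k => hclamp _ (htkT k) _ _ _ _

end Hamiltonian

section Penalty

variable {E : Type*} [NormedAddCommGroup E]

def penalty (κ t₀ : ℝ) (x₀ : E) (s : ℝ) (y : E) : ℝ :=
  κ * (s - t₀) ^ 2 + ‖y - x₀‖ ^ 4

lemma continuous_penalty (κ t₀ : ℝ) (x₀ : E) :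
    Continuous fun z : ℝ × E => penalty κ t₀ x₀ z.1 z.2 := by
  unfold penalty
  fun_prop

@[simp]
lemma penalty_self (κ t₀ : ℝ) (x₀ : E) : penalty κ t₀ x₀ t₀ x₀ = 0 := by
  simp [penalty]

lemma penalty_pos {κ t₀ s : ℝ} {x₀ y : E} (hκ : 0 < κ) (h : (s, y) ≠ (t₀, x₀)) :
    0 < penalty κ t₀ x₀ s y := by
  unfold penalty
  rcases ne_or_eq s t₀ with hs | rfl
  · have := sq_pos_of_ne_zero (sub_ne_zero.2 hs)
    positivity
  · have : y - x₀ ≠ 0 := sub_ne_zero.2 fun hy => h (by rw [hy])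
    positivity

lemma exists_isCompact_lt_penalty [ProperSpace E] {T t₀ : ℝ} (ht₀ : t₀ ∈ Ico 0 T) (x₀ : E)
    (L : ℝ) : ∃ κ > 0, ∃ K : Set (ℝ × E), IsCompact K ∧ K ⊆ Ico 0 T ×ˢ univ ∧ (t₀, x₀) ∈ K ∧
      ∀ s ≥ 0, ∀ y, (s, y) ∉ K → L < penalty κ t₀ x₀ s y := by
  have hT' : t₀ < (t₀ + T) / 2 ∧ (t₀ + T) / 2 < T := by constructor <;> linarith [ht₀.2]
  set T' := (t₀ + T) / 2
  set R := |L| + 1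
  have hLR : L < R := by linarith [le_abs_self L]
  refine ⟨R / (T' - t₀) ^ 2, by have := sub_pos.2 hT'.1; positivity,
    Icc 0 T' ×ˢ Metric.closedBall x₀ R, isCompact_Icc.prod (isCompact_closedBall x₀ R),
    fun z hz => ⟨⟨hz.1.1, hz.1.2.trans_lt hT'.2⟩, trivial⟩,
    ⟨⟨ht₀.1, hT'.1.le⟩, Metric.mem_closedBall_self (by positivity)⟩, fun s hs y hout => ?_⟩
  simp only [mem_prod, mem_Icc, Metric.mem_closedBall, not_and_or, not_le, dist_eq_norm] at hout
  unfold penalty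
  rcases hout with hsT' | hy
  · replace hsT' : T' < s := hsT'.resolve_left (not_lt.2 hs)
    have hsq : (T' - t₀) ^ 2 ≤ (s - t₀) ^ 2 := by nlinarith [hT'.1]
    calc L < R := hLR
      _ = R / (T' - t₀) ^ 2 * (T' - t₀) ^ 2 := by
        field_simp [(sub_pos.2 hT'.1).ne']
      _ ≤ R / (T' - t₀) ^ 2 * (s - t₀) ^ 2 := by gcongr
      _ ≤ _ := le_add_of_nonneg_right (by positivity)
  · have h1 : 1 ≤ ‖y - x₀‖ := by linarith [abs_nonneg L]
    have h4 : ‖y - x₀‖ ≤ ‖y - x₀‖ ^ 4 := le_self_pow₀ h1 (by norm_num)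
    have h0 : 0 ≤ R / (T' - t₀) ^ 2 * (s - t₀) ^ 2 := by positivity
    linarith

end Penalty

section PenalizedTestFunction

open InnerProductSpace

lemma hasGradientAt_norm_sub_pow_four {E : Type*} [NormedAddCommGroup E] [InnerProductSpace ℝ E]
    [CompleteSpace E] (x₀ x : E) :
    HasGradientAt (fun y => ‖y - x₀‖ ^ 4) ((4 * ‖x - x₀‖ ^ 2) • (x - x₀)) x := by
  have h2 := ((hasFDerivAt_id x).sub_const x₀).norm_sq
  have h4 := h2.pow 2
  simp only [← pow_mul] at h4
  rw [hasGradientAt_iff_hasFDerivAt]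
  refine h4.congr_fderiv (ContinuousLinearMap.ext fun w => ?_)
  simp only [id_eq, Nat.add_one_sub_one, mul_one, nsmul_eq_mul, Nat.cast_ofNat, map_sub,
    ContinuousLinearMap.comp_id, smul_apply, sub_apply, coe_innerSL_apply, smul_eq_mul, map_smul,
    toDual_apply_apply]
  ring

variable {n : ℕ}

def quarticHessian (x₀ y : En n) : Matrix (Fin n) (Fin n) ℝ :=
  (4 * ‖y - x₀‖ ^ 2) • 1 + (8 : ℝ) • Matrix.vecMulVec (y - x₀).ofLp (y - x₀).ofLp

lemma quarticHessian_self (x₀ : En n) : quarticHessian x₀ x₀ = 0 := by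
  simp [quarticHessian]

lemma continuous_quarticHessian (x₀ : En n) : Continuous (quarticHessian x₀) := by
  unfold quarticHessian
  fun_prop

lemma hasFDerivAt_quarticGradient (x₀ x : En n) :
    HasFDerivAt (fun y : En n => (4 * ‖y - x₀‖ ^ 2) • (y - x₀))
      (LinearMap.toContinuousLinearMap (Matrix.toEuclideanLin (quarticHessian x₀ x))) x := by
  have hsub := (hasFDerivAt_id (𝕜 := ℝ) x).sub_const x₀
  refine ((hsub.norm_sq.const_mul 4).smul hsub).congr_fderiv
    (ContinuousLinearMap.ext fun w => ?_)
  ext i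
  simp only [add_apply, smul_apply,
    ContinuousLinearMap.smulRight_apply, coe_innerSL_apply, ContinuousLinearMap.comp_id,
    ContinuousLinearMap.id_apply, EuclideanSpace.inner_eq_star_dotProduct, star_trivial,
    quarticHessian, map_add, map_smul, Matrix.toLpLin_one, LinearMap.coe_toContinuousLinearMap',
    Matrix.ofLp_toLpLin, Matrix.toLin'_apply, Matrix.vecMulVec_mulVec, PiLp.add_apply,
    PiLp.smul_apply, Pi.smul_apply, MulOpposite.smul_eq_mul_unop, MulOpposite.unop_op,
    LinearMap.id_coe, id_eq, smul_eq_mul, nsmul_eq_mul]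
  rw [dotProduct_comm]
  ring

lemma IsC12.add_penalty {T : ℝ} {φ φt : ℝ → En n → ℝ} {Dφ : ℝ → En n → En n}
    {D2φ : ℝ → En n → Matrix (Fin n) (Fin n) ℝ} (h : IsC12 T φ φt Dφ D2φ) (κ t₀ : ℝ) (x₀ : En n) :
    IsC12 T (fun s y => φ s y + penalty κ t₀ x₀ s y) (fun s y => φt s y + 2 * κ * (s - t₀))
      (fun s y => Dφ s y + (4 * ‖y - x₀‖ ^ 2) • (y - x₀))
      (fun s y => D2φ s y + quarticHessian x₀ y) where
  cont := h.cont.add (continuous_penalty κ t₀ x₀).continuousOn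
  cont_t := h.cont_t.add (by fun_prop : Continuous fun p : ℝ × En n =>
    2 * κ * (p.1 - t₀)).continuousOn
  cont_D := h.cont_D.add (by fun_prop : Continuous fun p : ℝ × En n =>
    (4 * ‖p.2 - x₀‖ ^ 2) • (p.2 - x₀)).continuousOn
  cont_D2 := h.cont_D2.add ((continuous_quarticHessian x₀).comp continuous_snd).continuousOn
  deriv_t t ht x := by
    have hpen : HasDerivAt (fun s => penalty κ t₀ x₀ s x) (2 * κ * (t - t₀)) t := by
      refine (((((hasDerivAt_id t).sub_const t₀).pow 2).const_mul κ).add_const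
        (‖x - x₀‖ ^ 4)).congr_deriv ?_
      simp only [id_eq, Nat.cast_ofNat, Nat.add_one_sub_one, pow_one, mul_one]
      ring
    exact (h.deriv_t t ht x).add hpen.hasDerivWithinAt
  grad_x t ht x := by
    rw [hasGradientAt_iff_hasFDerivAt, map_add]
    exact (h.grad_x t ht x).hasFDerivAt.add
      ((hasGradientAt_norm_sub_pow_four x₀ x).hasFDerivAt.const_add _)
  hess_x t ht x := by
    rw [map_add, map_add]
    exact (h.hess_x t ht x).add (hasFDerivAt_quarticGradient x₀ x)

end PenalizedTestFunction

section DecreasingLimit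

variable {X : Type*} [TopologicalSpace X] {S : Set X} {f : ℕ → X → ℝ} {g : X → ℝ}

lemma eventually_lt_of_antitone_of_tendsto {z : X} {a y : ℝ}
    (hf : ∀ p, UpperSemicontinuousWithinAt (f p) S z) (hanti : ∀ x ∈ S, Antitone fun p => f p x)
    (hlim : Tendsto (fun p => f p z) atTop (𝓝 a)) (hy : a < y) :
    ∀ᶠ q in atTop ×ˢ 𝓝[S] z, f q.1 q.2 < y := by
  obtain ⟨P, hP⟩ := (hlim.eventually_lt_const hy).exists
  filter_upwards [(eventually_ge_atTop P).prod_mk ((hf P y hP).and self_mem_nhdsWithin)]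
    with q ⟨hq, hlt, hS⟩
  exact (hanti q.2 hS hq).trans_lt hlt

lemma upperSemicontinuousOn_of_antitone_of_tendsto (hf : ∀ p, UpperSemicontinuousOn (f p) S)
    (hanti : ∀ x ∈ S, Antitone fun p => f p x)
    (hlim : ∀ x ∈ S, Tendsto (fun p => f p x) atTop (𝓝 (g x))) : UpperSemicontinuousOn g S := by
  intro z hz y hy
  obtain ⟨p, hp⟩ := (eventually_lt_of_antitone_of_tendsto (fun p => hf p z hz) hanti (hlim z hz)
    hy).curry.exists
  filter_upwards [hp, self_mem_nhdsWithin] with x hx hxS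
  exact ((hanti x hxS).le_of_tendsto (hlim x hxS) p).trans_lt hx

lemma tendsto_of_isStrictMax_of_antitone {D : Set X} (hDS : D ⊆ S) {χ : X → ℝ} {z₀ z : X}
    {zk : ℕ → X} {pk : ℕ → ℕ} (hf : ∀ p, UpperSemicontinuousOn (f p) S)
    (hanti : ∀ x ∈ S, Antitone fun p => f p x)
    (hlim : ∀ x ∈ S, Tendsto (fun p => f p x) atTop (𝓝 (g x))) (hχ : ContinuousOn χ D)
    (hz₀ : z₀ ∈ D) (hstrict : ∀ x ∈ D, x ≠ z₀ → g x - χ x < g z₀ - χ z₀)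
    (hzkD : ∀ k, zk k ∈ D) (hmax : ∀ k, f (pk k) z₀ - χ z₀ ≤ f (pk k) (zk k) - χ (zk k))
    (hz : z ∈ D) (hzk : Tendsto zk atTop (𝓝 z)) (hpk : Tendsto pk atTop atTop) :
    z = z₀ ∧ Tendsto (fun k => f (pk k) (zk k)) atTop (𝓝 (g z₀)) := by
  have hzkD' : Tendsto zk atTop (𝓝[D] z) :=
    tendsto_nhdsWithin_iff.2 ⟨hzk, Eventually.of_forall hzkD⟩
  have hχk : Tendsto (fun k => χ (zk k)) atTop (𝓝 (χ z)) := (hχ z hz).tendsto.comp hzkD'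
  have hlower : ∀ k, g z₀ - χ z₀ ≤ f (pk k) (zk k) - χ (zk k) := fun k =>
    (sub_le_sub_right ((hanti z₀ (hDS hz₀)).le_of_tendsto (hlim z₀ (hDS hz₀)) (pk k)) _).trans
      (hmax k)
  have hupper : ∀ y, g z - χ z < y → ∀ᶠ k in atTop, f (pk k) (zk k) - χ (zk k) < y := by
    intro y hy
    have hδ : 0 < (y - (g z - χ z)) / 2 := half_pos (sub_pos.2 hy)
    have hfk := (hpk.prodMk (tendsto_nhdsWithin_mono_right hDS hzkD')).eventually
      (eventually_lt_of_antitone_of_tendsto (fun p => hf p z (hDS hz)) hanti (hlim z (hDS hz))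
        (lt_add_of_pos_right (g z) hδ))
    filter_upwards [hfk, hχk.eventually_const_lt (sub_lt_self (χ z) hδ)] with k h1 h2
    linarith
  have hle : g z₀ - χ z₀ ≤ g z - χ z := le_of_forall_gt fun y hy => by
    obtain ⟨k, hk⟩ := (hupper y hy).exists
    exact (hlower k).trans_lt hk
  obtain rfl : z = z₀ := by
    by_contra hne
    exact (hstrict z hz hne).not_ge hle
  refine ⟨rfl, ?_⟩
  have hconv : Tendsto (fun k => f (pk k) (zk k) - χ (zk k)) atTop (𝓝 (g z - χ z)) :=
    tendsto_order.2 ⟨fun y hy => Eventually.of_forall fun k => hy.trans_le (hlower k), hupper⟩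
  simpa using hconv.add hχk

lemma IsCompact.exists_isMaxOn_of_forall_notMem_le {K D : Set X} {u : X → ℝ} (hK : IsCompact K)
    {z₀ : X} (hz₀ : z₀ ∈ K) (hu : ContinuousOn u K)
    (hout : ∀ x ∈ D, x ∉ K → u x ≤ u z₀) : ∃ z ∈ K, IsMaxOn u D z := by
  obtain ⟨z, hzK, hmax⟩ := hK.exists_isMaxOn ⟨z₀, hz₀⟩ hu
  refine ⟨z, hzK, isMaxOn_iff.2 fun x hx => ?_⟩
  by_cases hxK : x ∈ K
  · exact isMaxOn_iff.1 hmax x hxK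
  · exact (hout x hx hxK).trans (isMaxOn_iff.1 hmax z₀ hz₀)

lemma exists_tendsto_isMaxOn_sub_of_antitone [FirstCountableTopology X] {D K : Set X}
    (hDS : D ⊆ S) (hKD : K ⊆ D) (hK : IsCompact K) {χ : X → ℝ} {z₀ : X}
    (hf : ∀ p, ContinuousOn (f p) S) (hanti : ∀ x ∈ S, Antitone fun p => f p x)
    (hlim : ∀ x ∈ S, Tendsto (fun p => f p x) atTop (𝓝 (g x))) (hχ : ContinuousOn χ D)
    (hz₀ : z₀ ∈ K) (hstrict : ∀ x ∈ D, x ≠ z₀ → g x - χ x < g z₀ - χ z₀)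
    (hout : ∀ p, ∀ x ∈ D, x ∉ K → f p x - χ x ≤ f p z₀ - χ z₀) :
    ∃ (zk : ℕ → X) (pk : ℕ → ℕ), Tendsto pk atTop atTop ∧
      (∀ k, zk k ∈ K ∧ IsMaxOn (fun x => f (pk k) x - χ x) D (zk k)) ∧
      Tendsto zk atTop (𝓝 z₀) ∧ Tendsto (fun k => f (pk k) (zk k)) atTop (𝓝 (g z₀)) := by
  choose zp hzpK hzpmax using fun p => hK.exists_isMaxOn_of_forall_notMem_le hz₀
    (((hf p).mono (hKD.trans hDS)).sub (hχ.mono hKD)) (hout p)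
  obtain ⟨z, hzK, ψ, hψ, hzψ⟩ := hK.tendsto_subseq hzpK
  obtain ⟨rfl, hval⟩ := tendsto_of_isStrictMax_of_antitone hDS
    (fun p => (hf p).upperSemicontinuousOn) hanti hlim hχ (hKD hz₀) hstrict
    (fun k => hKD (hzpK (ψ k))) (fun k => isMaxOn_iff.1 (hzpmax (ψ k)) z₀ (hKD hz₀)) (hKD hzK)
    hzψ hψ.tendsto_atTop
  exact ⟨zp ∘ ψ, ψ, hψ.tendsto_atTop, fun k => ⟨hzpK _, hzpmax _⟩, hzψ, hval⟩

end DecreasingLimit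

lemma exists_tendsto_maximizers_sub_penalty {E : Type*} [NormedAddCommGroup E] [ProperSpace E]
    {T : ℝ} {w : ℕ → ℝ → E → ℝ} {w₀ φ : ℝ → E → ℝ}
    (hwc : ∀ p, ContinuousOn (fun z : ℝ × E => w p z.1 z.2) (Icc 0 T ×ˢ univ))
    (hanti : ∀ z ∈ Icc 0 T ×ˢ (univ : Set E), Antitone fun p => w p z.1 z.2)
    (hlim : ∀ z ∈ Icc 0 T ×ˢ (univ : Set E),
      Tendsto (fun p => w p z.1 z.2) atTop (𝓝 (w₀ z.1 z.2)))
    {L : ℝ} (hgap : ∀ p, ∀ s ∈ Icc 0 T, ∀ y, w p s y ≤ w₀ s y + L)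
    (hφ : ContinuousOn (fun z : ℝ × E => φ z.1 z.2) (Ico 0 T ×ˢ univ)) {t₀ : ℝ}
    (ht₀ : t₀ ∈ Ico 0 T) {x₀ : E} (hmax : ∀ s ∈ Ico 0 T, ∀ y, w₀ s y - φ s y ≤ w₀ t₀ x₀ - φ t₀ x₀) :
    ∃ (κ : ℝ) (zk : ℕ → ℝ × E) (pk : ℕ → ℕ), Tendsto pk atTop atTop ∧
      (∀ k, zk k ∈ Ico 0 T ×ˢ univ ∧ ∀ s ∈ Ico 0 T, ∀ y,
        w (pk k) s y - (φ s y + penalty κ t₀ x₀ s y) ≤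
          w (pk k) (zk k).1 (zk k).2 - (φ (zk k).1 (zk k).2 + penalty κ t₀ x₀ (zk k).1 (zk k).2)) ∧
      Tendsto zk atTop (𝓝 (t₀, x₀)) ∧
      Tendsto (fun k => w (pk k) (zk k).1 (zk k).2) atTop (𝓝 (w₀ t₀ x₀)) := by
  have hIco : Ico 0 T ×ˢ (univ : Set E) ⊆ Icc 0 T ×ˢ univ :=
    prod_mono Ico_subset_Icc_self subset_rfl
  obtain ⟨κ, hκ, K, hK, hKD, hz₀K, hpen⟩ := exists_isCompact_lt_penalty ht₀ x₀ L
  have hz₀ : (t₀, x₀) ∈ Ico 0 T ×ˢ (univ : Set E) := hKD hz₀K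
  have hχ : ContinuousOn (fun z : ℝ × E => φ z.1 z.2 + penalty κ t₀ x₀ z.1 z.2)
      (Ico 0 T ×ˢ univ) :=
    hφ.add (continuous_penalty κ t₀ x₀).continuousOn
  have hstrict : ∀ z ∈ Ico 0 T ×ˢ (univ : Set E), z ≠ (t₀, x₀) →
      w₀ z.1 z.2 - (φ z.1 z.2 + penalty κ t₀ x₀ z.1 z.2)
        < w₀ t₀ x₀ - (φ t₀ x₀ + penalty κ t₀ x₀ t₀ x₀) := fun z hz hne => by
    have := penalty_pos (s := z.1) (y := z.2) hκ hne
    linarith [hmax z.1 hz.1 z.2, penalty_self κ t₀ x₀]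
  have hout : ∀ p, ∀ z ∈ Ico 0 T ×ˢ (univ : Set E), z ∉ K →
      w p z.1 z.2 - (φ z.1 z.2 + penalty κ t₀ x₀ z.1 z.2)
        ≤ w p t₀ x₀ - (φ t₀ x₀ + penalty κ t₀ x₀ t₀ x₀) := fun p z hz hzK => by
    linarith [hpen z.1 hz.1.1 z.2 hzK, hgap p z.1 (hIco hz).1 z.2, hmax z.1 hz.1 z.2,
      (hanti _ (hIco hz₀)).le_of_tendsto (hlim _ (hIco hz₀)) p, penalty_self κ t₀ x₀]
  obtain ⟨zk, pk, hpk, hzk, hzk_lim, hwk_lim⟩ :=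
    exists_tendsto_isMaxOn_sub_of_antitone hIco hKD hK hwc hanti hlim hχ hz₀K hstrict hout
  exact ⟨κ, zk, pk, hpk, fun k => ⟨hKD (hzk k).1,
    fun s hs y => isMaxOn_iff.1 (hzk k).2 (s, y) ⟨hs, trivial⟩⟩, hzk_lim, hwk_lim⟩

section Stability

variable {n d : ℕ} {A B : Type} [TopologicalSpace A] [CompactSpace A] [Nonempty A]
  [TopologicalSpace B] [CompactSpace B] [Nonempty B]

lemma neg_timeDeriv_sub_Hinf_nonpos_of_antitone {T : ℝ}
    {b : ℝ → En n → A → B → En n} {σm : ℝ → En n → A → B → Matrix (Fin n) (Fin d) ℝ}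
    {fs : ℕ → ℝ → En n → ℝ → En d → A → B → ℝ} {f : ℝ → En n → ℝ → En d → A → B → ℝ}
    (hb : ContinuousOn (fun p : ℝ × En n × A × B => b p.1 p.2.1 p.2.2.1 p.2.2.2)
      (Icc 0 T ×ˢ univ))
    (hσ : ContinuousOn (fun p : ℝ × En n × A × B => σm p.1 p.2.1 p.2.2.1 p.2.2.2)
      (Icc 0 T ×ˢ univ))
    (hf : ContinuousOn (fun p : ℝ × En n × ℝ × En d × A × B =>
      f p.1 p.2.1 p.2.2.1 p.2.2.2.1 p.2.2.2.2.1 p.2.2.2.2.2) (Icc 0 T ×ˢ univ))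
    (hfs : ∀ K : Set (ℝ × En n × ℝ × En d × A × B), IsCompact K →
      TendstoUniformlyOn (fun p (y : ℝ × En n × ℝ × En d × A × B) =>
          fs p y.1 y.2.1 y.2.2.1 y.2.2.2.1 y.2.2.2.2.1 y.2.2.2.2.2)
        (fun y => f y.1 y.2.1 y.2.2.1 y.2.2.2.1 y.2.2.2.2.1 y.2.2.2.2.2) atTop K)
    {ℓ ℓ' : ℝ → En n → ℝ} {G : En n → ℝ}
    (hℓ : ContinuousOn (fun z : ℝ × En n => ℓ z.1 z.2) (Icc 0 T ×ˢ univ))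
    {w : ℕ → ℝ → En n → ℝ} {w₀ : ℝ → En n → ℝ}
    (hwsub : ∀ p, IsSubsolution T (Hinf A B b σm (fs p)) ℓ ℓ' G (w p))
    (hwc : ∀ p, ContinuousOn (fun z : ℝ × En n => w p z.1 z.2) (Icc 0 T ×ˢ univ))
    (hanti : ∀ z ∈ Icc 0 T ×ˢ (univ : Set (En n)), Antitone fun p => w p z.1 z.2)
    (hlim : ∀ z ∈ Icc 0 T ×ˢ (univ : Set (En n)),
      Tendsto (fun p => w p z.1 z.2) atTop (𝓝 (w₀ z.1 z.2)))
    {L : ℝ} (hgap : ∀ p, ∀ s ∈ Icc 0 T, ∀ y, w p s y ≤ w₀ s y + L)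
    {φ φt : ℝ → En n → ℝ} {Dφ : ℝ → En n → En n} {D2φ : ℝ → En n → Matrix (Fin n) (Fin n) ℝ}
    (hφ : IsC12 T φ φt Dφ D2φ) {t₀ : ℝ} (ht₀ : t₀ ∈ Ico 0 T) {x₀ : En n}
    (hmax : ∀ s ∈ Ico 0 T, ∀ y, w₀ s y - φ s y ≤ w₀ t₀ x₀ - φ t₀ x₀)
    (hobst : ℓ t₀ x₀ < w₀ t₀ x₀) :
    -(φt t₀ x₀) - Hinf A B b σm f t₀ x₀ (w₀ t₀ x₀) (Dφ t₀ x₀) (D2φ t₀ x₀) ≤ 0 := by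
  have hIco : Ico 0 T ×ˢ (univ : Set (En n)) ⊆ Icc 0 T ×ˢ univ :=
    prod_mono Ico_subset_Icc_self subset_rfl
  have hz₀ : (t₀, x₀) ∈ Ico 0 T ×ˢ (univ : Set (En n)) := ⟨ht₀, trivial⟩
  obtain ⟨κ, zk, pk, hpk, hzk, hzk_lim, hwk_lim⟩ :=
    exists_tendsto_maximizers_sub_penalty hwc hanti hlim hgap hφ.cont ht₀ hmax
  have hχ := hφ.add_penalty κ t₀ x₀
  have hzk_within : Tendsto zk atTop (𝓝[Ico 0 T ×ˢ univ] (t₀, x₀)) :=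
    tendsto_nhdsWithin_iff.2 ⟨hzk_lim, Eventually.of_forall fun k => (hzk k).1⟩
  -- the obstacle is inactive along the maximizers, so each `w (pk k)` satisfies the PDE there
  have hℓk : Tendsto (fun k => ℓ (zk k).1 (zk k).2) atTop (𝓝 (ℓ t₀ x₀)) :=
    (hℓ _ (hIco hz₀)).tendsto.comp (tendsto_nhdsWithin_mono_right hIco hzk_within)
  have hpde : ∀ᶠ k in atTop, -(φt (zk k).1 (zk k).2 + 2 * κ * ((zk k).1 - t₀))
      - Hinf A B b σm (fs (pk k)) (zk k).1 (zk k).2 (w (pk k) (zk k).1 (zk k).2)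
          (Dφ (zk k).1 (zk k).2 + (4 * ‖(zk k).2 - x₀‖ ^ 2) • ((zk k).2 - x₀))
          (D2φ (zk k).1 (zk k).2 + quarticHessian x₀ (zk k).2) ≤ 0 := by
    filter_upwards [hℓk.eventually_lt hwk_lim hobst] with k hk
    have hsub := (hwsub (pk k)).2.2 _ _ _ _ hχ (zk k).1 (hzk k).1.1 (zk k).2 (hzk k).2
    exact (max_le_iff.1 ((min_le_iff.1 hsub).resolve_left (by linarith))).1
  have htk : Tendsto (fun k => φt (zk k).1 (zk k).2 + 2 * κ * ((zk k).1 - t₀)) atTop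
      (𝓝 (φt t₀ x₀)) := by
    simpa [Function.comp_def] using (hχ.cont_t _ hz₀).tendsto.comp hzk_within
  have hDk : Tendsto (fun k => Dφ (zk k).1 (zk k).2 + (4 * ‖(zk k).2 - x₀‖ ^ 2) • ((zk k).2 - x₀))
      atTop (𝓝 (Dφ t₀ x₀)) := by
    simpa [Function.comp_def] using (hχ.cont_D _ hz₀).tendsto.comp hzk_within
  have hD2k : Tendsto (fun k => D2φ (zk k).1 (zk k).2 + quarticHessian x₀ (zk k).2) atTop
      (𝓝 (D2φ t₀ x₀)) := by
    simpa [Function.comp_def, quarticHessian_self] using (hχ.cont_D2 _ hz₀).tendsto.comp hzk_within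
  have hHk := tendsto_Hinf_of_continuousOn (ht₀.1.trans ht₀.2.le) hb hσ hf hfs
    (fun k => (hIco (hzk k).1).1) (hIco hz₀).1 ((continuous_fst.tendsto _).comp hzk_lim)
    ((continuous_snd.tendsto _).comp hzk_lim) hwk_lim hDk hD2k hpk
  exact le_of_tendsto (htk.neg.sub hHk) hpde

end Stability

theorem stability_subsolution_decreasing_general
    {n d : ℕ} (T : ℝ) (hT : 0 < T)
    (A B : Type) [MetricSpace A] [CompactSpace A] [Nonempty A]
    [MetricSpace B] [CompactSpace B] [Nonempty B]
    (b : ℝ → En n → A → B → En n)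
    (σm : ℝ → En n → A → B → Matrix (Fin n) (Fin d) ℝ)
    (hH1 : HypH1 T A B b σm)
    (fs : ℕ → ℝ → En n → ℝ → En d → A → B → ℝ)
    (ft : ℝ → En n → ℝ → En d → A → B → ℝ)
    (hftc : ContinuousOn (fun q : ℝ × En n × ℝ × En d × A × B => ft q.1 q.2.1 q.2.2.1 q.2.2.2.1 q.2.2.2.2.1 q.2.2.2.2.2) (Icc 0 T ×ˢ (univ : Set (En n × ℝ × En d × A × B))))
    (hfconv : ∀ Kc : Set (ℝ × En n × ℝ × En d × A × B), IsCompact Kc →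
        TendstoUniformlyOn (fun p => fun q : ℝ × En n × ℝ × En d × A × B => fs p q.1 q.2.1 q.2.2.1 q.2.2.2.1 q.2.2.2.2.1 q.2.2.2.2.2)
          (fun q : ℝ × En n × ℝ × En d × A × B => ft q.1 q.2.1 q.2.2.1 q.2.2.2.1 q.2.2.2.2.1 q.2.2.2.2.2) atTop Kc)
    (ℓ ℓ' : ℝ → En n → ℝ) (G : En n → ℝ)
    (hℓc : ContinuousOn (fun p : ℝ × En n => ℓ p.1 p.2) (Icc 0 T ×ˢ univ))
    (hℓbd : ∃ M, ∀ t ∈ Icc (0:ℝ) T, ∀ x : En n, |ℓ t x| ≤ M ∧ |ℓ' t x| ≤ M)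
    (w : ℕ → ℝ → En n → ℝ)
    (hwsol : ∀ p, IsSubsolution T (Hinf A B b σm (fs p)) ℓ ℓ' G (w p)
        ∧ IsSupersolution T (Hinf A B b σm (fs p)) ℓ ℓ' G (w p))
    (hwc : ∀ p, ContinuousOn (fun q : ℝ × En n => w p q.1 q.2) (Icc 0 T ×ˢ univ))
    (hwobst : ∀ p, ∀ t ∈ Icc (0:ℝ) T, ∀ x : En n, ℓ t x ≤ w p t x ∧ w p t x ≤ ℓ' t x)
    (w0 : ℝ → En n → ℝ)
    (hw0 : ∀ t ∈ Icc (0:ℝ) T, ∀ x : En n,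
        Tendsto (fun p => w p t x) atTop (𝓝 (w0 t x)))
    (hwmono : ∀ p, ∀ t ∈ Icc (0:ℝ) T, ∀ x : En n, w (p+1) t x ≤ w p t x) :
    IsSubsolution T (Hinf A B b σm ft) ℓ ℓ' G w0 := by
  obtain ⟨M, hM⟩ := hℓbd
  have hanti : ∀ z ∈ Icc 0 T ×ˢ (univ : Set (En n)), Antitone fun p => w p z.1 z.2 :=
    fun z hz => antitone_nat_of_succ_le fun p => hwmono p z.1 hz.1 z.2
  have hlim : ∀ z ∈ Icc 0 T ×ˢ (univ : Set (En n)),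
      Tendsto (fun p => w p z.1 z.2) atTop (𝓝 (w0 z.1 z.2)) := fun z hz => hw0 z.1 hz.1 z.2
  have hw0obst : ∀ t ∈ Icc 0 T, ∀ x, ℓ t x ≤ w0 t x ∧ w0 t x ≤ ℓ' t x := fun t ht x =>
    ⟨ge_of_tendsto' (hw0 t ht x) fun p => (hwobst p t ht x).1,
      le_of_tendsto' (hw0 t ht x) fun p => (hwobst p t ht x).2⟩
  have hgap : ∀ p, ∀ t ∈ Icc 0 T, ∀ x, w p t x ≤ w0 t x + 2 * M := fun p t ht x => by
    linarith [(hwobst p t ht x).2, (hw0obst t ht x).1, abs_le.1 (hM t ht x).1,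
      abs_le.1 (hM t ht x).2]
  refine ⟨upperSemicontinuousOn_of_antitone_of_tendsto
      (fun p => (hwc p).upperSemicontinuousOn) hanti hlim,
    fun x => le_of_tendsto' (hw0 T ⟨hT.le, le_rfl⟩ x) fun p => (hwsol p).1.2.1 x, ?_⟩
  intro φ φt Dφ D2φ hφ t₀ ht₀ x₀ hmax
  rcases le_or_gt (w0 t₀ x₀) (ℓ t₀ x₀) with hobst | hobst
  · exact min_le_of_left_le (sub_nonpos.2 hobst)
  refine min_le_of_right_le (max_le ?_ (sub_nonpos.2 (hw0obst t₀ (Ico_subset_Icc_self ht₀) x₀).2))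
  exact neg_timeDeriv_sub_Hinf_nonpos_of_antitone hH1.1 hH1.2.1 hftc hfconv hℓc
    (fun p => (hwsol p).1) hwc hanti hlim hgap hφ ht₀ hmax hobst

/-- Stability of viscosity subsolutions under monotone decreasing
limits of solutions. -/
theorem stability_subsolution_decreasing
    {n d : ℕ} (hn : 1 ≤ n) (hd : 1 ≤ d) (T : ℝ) (hT : 0 < T)
    (A B : Type) [MetricSpace A] [CompactSpace A] [Nonempty A]
    [MetricSpace B] [CompactSpace B] [Nonempty B]
    (b : ℝ → En n → A → B → En n)
    (σm : ℝ → En n → A → B → Matrix (Fin n) (Fin d) ℝ)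
    (hH1 : HypH1 T A B b σm)
    (fs : ℕ → ℝ → En n → ℝ → En d → A → B → ℝ)
    (ft : ℝ → En n → ℝ → En d → A → B → ℝ)
    (hfc : ∀ p, ContinuousOn (fun q : ℝ × En n × ℝ × En d × A × B => fs p q.1 q.2.1 q.2.2.1 q.2.2.2.1 q.2.2.2.2.1 q.2.2.2.2.2) (Icc 0 T ×ˢ (univ : Set (En n × ℝ × En d × A × B))))
    (hftc : ContinuousOn (fun q : ℝ × En n × ℝ × En d × A × B => ft q.1 q.2.1 q.2.2.1 q.2.2.2.1 q.2.2.2.2.1 q.2.2.2.2.2) (Icc 0 T ×ˢ (univ : Set (En n × ℝ × En d × A × B))))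
    (hfconv : ∀ Kc : Set (ℝ × En n × ℝ × En d × A × B), IsCompact Kc →
        TendstoUniformlyOn (fun p => fun q : ℝ × En n × ℝ × En d × A × B => fs p q.1 q.2.1 q.2.2.1 q.2.2.2.1 q.2.2.2.2.1 q.2.2.2.2.2)
          (fun q : ℝ × En n × ℝ × En d × A × B => ft q.1 q.2.1 q.2.2.1 q.2.2.2.1 q.2.2.2.2.1 q.2.2.2.2.2) atTop Kc)
    (ℓ ℓ' : ℝ → En n → ℝ) (G : En n → ℝ)
    (hℓc : ContinuousOn (fun p : ℝ × En n => ℓ p.1 p.2) (Icc 0 T ×ˢ univ))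
    (hℓ'c : ContinuousOn (fun p : ℝ × En n => ℓ' p.1 p.2) (Icc 0 T ×ˢ univ))
    (hℓbd : ∃ M, ∀ t ∈ Icc (0:ℝ) T, ∀ x : En n, |ℓ t x| ≤ M ∧ |ℓ' t x| ≤ M)
    (hGc : Continuous G) (hGbd : ∃ M, ∀ x : En n, |G x| ≤ M)
    (hord : ∀ t ∈ Icc (0:ℝ) T, ∀ x : En n, ℓ t x < ℓ' t x)
    (hordT : ∀ x : En n, ℓ T x ≤ G x ∧ G x ≤ ℓ' T x)
    (w : ℕ → ℝ → En n → ℝ)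
    (hwsol : ∀ p, IsSubsolution T (Hinf A B b σm (fs p)) ℓ ℓ' G (w p)
        ∧ IsSupersolution T (Hinf A B b σm (fs p)) ℓ ℓ' G (w p))
    (hwc : ∀ p, ContinuousOn (fun q : ℝ × En n => w p q.1 q.2) (Icc 0 T ×ˢ univ))
    (hwobst : ∀ p, ∀ t ∈ Icc (0:ℝ) T, ∀ x : En n, ℓ t x ≤ w p t x ∧ w p t x ≤ ℓ' t x)
    (w0 : ℝ → En n → ℝ)
    (hw0 : ∀ t ∈ Icc (0:ℝ) T, ∀ x : En n,
        Tendsto (fun p => w p t x) atTop (𝓝 (w0 t x)))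
    (hfmono : ∀ p, ∀ t ∈ Icc (0:ℝ) T, ∀ (x : En n) (y : ℝ) (z : En d) (α : A) (β : B),
        fs (p+1) t x y z α β ≤ fs p t x y z α β)
    (hwmono : ∀ p, ∀ t ∈ Icc (0:ℝ) T, ∀ x : En n, w (p+1) t x ≤ w p t x) :
    IsSubsolution T (Hinf A B b σm ft) ℓ ℓ' G w0 :=
  stability_subsolution_decreasing_general T hT A B b σm hH1 fs ft hftc hfconv ℓ ℓ' G hℓc hℓbd w
    hwsol hwc hwobst w0 hw0 hwmono
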